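/- Let n ≥ 11 be an integer with n ≡ 3 (mod 4), let f be an edge-friendly binary edge labeling of the complete graph K_n with e_f(0) ≥ (C(n,2) − 1)/2, and let v be a vertex that is unlabeled under the induced partial vertex labeling. If every vertex of N_0(v) has at most one 0-edge to a vertex of N_1(v), then there is at least one 0-edge joining two vertices of N_1(v); indeed, the number of 0-edges with both endpoints in N_1(v) is at least (C(n,2) − 1)/2 − C((n−1)/2, 2) − (n−1)/2 − (n−1)/2 ≥ 1. -/

import Mathlib

/-!
Edge-friendly labelings (Krop, Lee, Raridan).  A binary edge labeling of a
graph `G` is `f : Sym2 V → Fin 2` (only its values on edges matter).  For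
`i : Fin 2`, `nbr G f i v` is the set `N_i(v)` of neighbors of `v` joined to
`v` by an `i`-edge, `edgeCount G f i` is `e_f(i)`, and `vertexLabel G f v` is
the induced partial vertex label `f⁺(v)` (with `none` meaning unlabeled).
-/

open Finset

attribute [local instance] Classical.propDecidable

noncomputable section

namespace EdgeLabeling

variable {V : Type*} [Fintype V]

/-- `N_i(v)`: neighbors of `v` joined to `v` by an edge labeled `i`. -/
def nbr (G : SimpleGraph V) (f : Sym2 V → Fin 2) (i : Fin 2) (v : V) : Finset V :=
  Finset.univ.filter fun u => G.Adj v u ∧ f s(v, u) = i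

/-- `e_f(i)`: the number of edges of `G` labeled `i`. -/
def edgeCount (G : SimpleGraph V) (f : Sym2 V → Fin 2) (i : Fin 2) : ℕ :=
  (G.edgeFinset.filter fun e => f e = i).card

/-- `f` is edge-friendly: `|e_f(0) - e_f(1)| ≤ 1`. -/
def EdgeFriendly (G : SimpleGraph V) (f : Sym2 V → Fin 2) : Prop :=
  |(edgeCount G f 0 : ℤ) - (edgeCount G f 1 : ℤ)| ≤ 1

/-- The induced partial vertex labeling `f⁺`. -/
def vertexLabel (G : SimpleGraph V) (f : Sym2 V → Fin 2) (v : V) : Option (Fin 2) :=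
  if (nbr G f 1 v).card < (nbr G f 0 v).card then some 0
  else if (nbr G f 0 v).card < (nbr G f 1 v).card then some 1
  else none

/-- `v` is unlabeled under the induced partial vertex labeling. -/
def Unlabeled (G : SimpleGraph V) (f : Sym2 V → Fin 2) (v : V) : Prop :=
  vertexLabel G f v = none

/-- `v_f(i)`: the number of vertices labeled `i` by `f⁺`. -/
def vertexCount (G : SimpleGraph V) (f : Sym2 V → Fin 2) (i : Fin 2) : ℕ :=
  (Finset.univ.filter fun v => vertexLabel G f v = some i).card

/-- `G` is opinionated: some edge-friendly labeling leaves no vertex unlabeled. -/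
def Opinionated (G : SimpleGraph V) : Prop :=
  ∃ f : Sym2 V → Fin 2, EdgeFriendly G f ∧ ∀ v : V, ¬ Unlabeled G f v

end EdgeLabeling

open EdgeLabeling

namespace EdgeLabeling

variable {V : Type*} [Fintype V]

/-- The number of edges of `G` labeled `i` with both endpoints in `S`. -/
def edgesWithin (G : SimpleGraph V) (f : Sym2 V → Fin 2) (i : Fin 2)
    (S : Finset V) : ℕ :=
  (G.edgeFinset.filter fun e => f e = i ∧ ∃ x ∈ S, ∃ y ∈ S, e = s(x, y)).card

/-- The number of edges of `G` labeled `i` with one endpoint in `S` and the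
other in `T`. -/
def edgesBetween (G : SimpleGraph V) (f : Sym2 V → Fin 2) (i : Fin 2)
    (S T : Finset V) : ℕ :=
  (G.edgeFinset.filter fun e => f e = i ∧ ∃ x ∈ S, ∃ y ∈ T, e = s(x, y)).card

/-- The number of edges of `G` labeled `i` incident with the vertex `v`. -/
def edgesIncident (G : SimpleGraph V) (f : Sym2 V → Fin 2) (i : Fin 2)
    (v : V) : ℕ :=
  (G.edgeFinset.filter fun e => f e = i ∧ v ∈ e).card

end EdgeLabeling

/-!
Split the 0-edges of `K_n` by their position relative to the partition
`V ∖ {v} = N_0(v) ∪ N_1(v)`: those at `v`, those inside `N_0(v)`, those between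
`N_0(v)` and `N_1(v)`, and those inside `N_1(v)`. Since `v` is unlabeled, both
neighbourhoods have `(n - 1)/2` vertices, so the first three classes have at most
`(n - 1)/2`, `C((n - 1)/2, 2)` and `(n - 1)/2` edges; the remaining 0-edges lie
inside `N_1(v)`. Writing `n = 4k + 3`, the resulting bound is `2k² - 1 ≥ 1`.
-/

namespace EdgeLabeling

variable {V : Type*} [Fintype V] {G : SimpleGraph V} {f : Sym2 V → Fin 2}

theorem mem_nbr {i : Fin 2} {v u : V} : u ∈ nbr G f i v ↔ G.Adj v u ∧ f s(v, u) = i := by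
  simp [nbr]

theorem disjoint_nbr_zero_one (v : V) : Disjoint (nbr G f 0 v) (nbr G f 1 v) := by
  refine disjoint_left.mpr fun u h0 h1 => ?_
  rw [mem_nbr] at h0 h1
  exact absurd (h0.2.symm.trans h1.2) (by decide)

theorem nbr_zero_union_nbr_one (v : V) [Fintype (G.neighborSet v)] :
    nbr G f 0 v ∪ nbr G f 1 v = G.neighborFinset v := by
  ext u
  rw [mem_union, mem_nbr, mem_nbr, SimpleGraph.mem_neighborFinset]
  rcases Fin.exists_fin_two.mp ⟨f s(v, u), rfl⟩ with h | h <;> simp [h]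

theorem card_nbr_zero_add_card_nbr_one (v : V) [Fintype (G.neighborSet v)] :
    (nbr G f 0 v).card + (nbr G f 1 v).card = G.degree v := by
  rw [← card_union_of_disjoint (disjoint_nbr_zero_one v), nbr_zero_union_nbr_one,
    SimpleGraph.card_neighborFinset_eq_degree]

theorem Unlabeled.card_nbr_one_eq {v : V} (hv : Unlabeled G f v) :
    (nbr G f 1 v).card = (nbr G f 0 v).card := by
  unfold Unlabeled vertexLabel at hv
  split_ifs at hv
  omega

theorem Unlabeled.two_mul_card_nbr {v : V} [Fintype (G.neighborSet v)] (hv : Unlabeled G f v)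
    (i : Fin 2) :
    2 * (nbr G f i v).card = G.degree v := by
  have := card_nbr_zero_add_card_nbr_one (G := G) (f := f) v
  have := hv.card_nbr_one_eq
  rcases Fin.exists_fin_two.mp ⟨i, rfl⟩ with rfl | rfl <;> omega

theorem mem_nbr_zero_or_mem_nbr_one {v u : V} (h : G.Adj v u) :
    u ∈ nbr G f 0 v ∨ u ∈ nbr G f 1 v := by
  simp only [mem_nbr, h, true_and]
  exact Fin.exists_fin_two.mp ⟨f s(v, u), rfl⟩

theorem edgeCount_le_add (i : Fin 2) (v : V) (S T : Finset V)
    (hcover : ∀ u, u ≠ v → u ∈ S ∨ u ∈ T) :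
    edgeCount G f i ≤ edgesIncident G f i v + edgesWithin G f i S
      + edgesBetween G f i S T + edgesWithin G f i T := by
  unfold edgeCount edgesIncident edgesWithin edgesBetween
  refine (card_le_card ?_).trans <| (card_union_le _ _).trans <| Nat.add_le_add_right
    ((card_union_le _ _).trans <| Nat.add_le_add_right (card_union_le _ _) _) _
  intro e he
  induction e using Sym2.ind with
  | h x y =>
    simp only [mem_union, mem_filter] at he ⊢
    obtain ⟨hG, hi⟩ := he
    by_cases hv : v ∈ s(x, y)
    · exact .inl <| .inl <| .inl ⟨hG, hi, hv⟩
    have hx := hcover x fun h => hv (h ▸ Sym2.mem_mk_left x y)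
    have hy := hcover y fun h => hv (h ▸ Sym2.mem_mk_right x y)
    rcases hx with hx | hx <;> rcases hy with hy | hy
    · exact .inl <| .inl <| .inr ⟨hG, hi, x, hx, y, hy, rfl⟩
    · exact .inl <| .inr ⟨hG, hi, x, hx, y, hy, rfl⟩
    · exact .inl <| .inr ⟨hG, hi, y, hy, x, hx, Sym2.eq_swap⟩
    · exact .inr ⟨hG, hi, x, hx, y, hy, rfl⟩

theorem edgesIncident_le_card_nbr (i : Fin 2) (v : V) :
    edgesIncident G f i v ≤ (nbr G f i v).card := by
  refine (card_le_card fun e he => ?_).trans (card_image_le (f := fun u => s(v, u)))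
  obtain ⟨hG, hi, hv⟩ := mem_filter.mp he
  obtain ⟨u, rfl⟩ := Sym2.mem_iff_exists.mp hv
  exact mem_image_of_mem _ (mem_nbr.mpr ⟨G.mem_edgeFinset.mp hG, hi⟩)

/-- The edges inside `S` and the diagonal `{s(x, x) | x ∈ S}` are disjoint parts of `S.sym2`,
which has `C(|S| + 1, 2) = |S| + C(|S|, 2)` elements. -/
theorem edgesWithin_le_choose_two (i : Fin 2) (S : Finset V) :
    edgesWithin G f i S ≤ S.card.choose 2 := by
  set W := G.edgeFinset.filter fun e => f e = i ∧ ∃ x ∈ S, ∃ y ∈ S, e = s(x, y)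
  have hW : W ⊆ S.sym2 := fun e he => by
    obtain ⟨-, -, x, hx, y, hy, rfl⟩ := mem_filter.mp he
    exact mk_mem_sym2_iff.mpr ⟨hx, hy⟩
  have hdiag : S.image Sym2.diag ⊆ S.sym2 := fun e he => by
    obtain ⟨x, hx, rfl⟩ := mem_image.mp he
    exact diag_mem_sym2_iff.mpr hx
  have hdisj : Disjoint W (S.image Sym2.diag) := disjoint_left.mpr fun e he hd => by
    obtain ⟨x, -, rfl⟩ := mem_image.mp hd
    exact G.not_isDiag_of_mem_edgeSet (G.mem_edgeFinset.mp (mem_filter.mp he).1)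
      (Sym2.diag_isDiag x)
  have := card_le_card (union_subset hW hdiag)
  rw [card_union_of_disjoint hdisj, card_image_of_injective _ Sym2.diag_injective, card_sym2,
    Nat.choose_succ_succ', Nat.choose_one_right] at this
  norm_num at this
  change W.card ≤ _
  omega

theorem edgesBetween_le_card_mul {i : Fin 2} {S T : Finset V} {k : ℕ}
    (h : ∀ u ∈ S, (T.filter fun w => f s(u, w) = i).card ≤ k) :
    edgesBetween G f i S T ≤ S.card * k := by
  have hsub : (G.edgeFinset.filter fun e => f e = i ∧ ∃ x ∈ S, ∃ y ∈ T, e = s(x, y)) ⊆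
      S.biUnion fun u => (T.filter fun w => f s(u, w) = i).image fun w => s(u, w) := by
    intro e he
    obtain ⟨-, hi, x, hx, y, hy, rfl⟩ := mem_filter.mp he
    exact mem_biUnion.mpr ⟨x, hx, mem_image_of_mem _ (mem_filter.mpr ⟨hy, hi⟩)⟩
  calc edgesBetween G f i S T ≤ ∑ u ∈ S, ((T.filter fun w => f s(u, w) = i).image
        fun w => s(u, w)).card := (card_le_card hsub).trans card_biUnion_le
    _ ≤ ∑ _u ∈ S, k := sum_le_sum fun u hu => card_image_le.trans (h u hu)
    _ = S.card * k := by rw [sum_const, smul_eq_mul]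

end EdgeLabeling

theorem choose_two_half_add_lt {n : ℕ} (hn : 7 ≤ n) (hmod : n % 4 = 3) :
    ((n - 1) / 2).choose 2 + (n - 1) / 2 + (n - 1) / 2 < (n.choose 2 - 1) / 2 := by
  obtain ⟨k, rfl⟩ : ∃ k, n = 4 * k + 3 := ⟨n / 4, by omega⟩
  have hhalf : (4 * k + 3 - 1) / 2 = 2 * k + 1 := by omega
  have hn2 : (4 * k + 3).choose 2 = (4 * k + 3) * (2 * k + 1) := by
    rw [Nat.choose_two_right, show 4 * k + 3 - 1 = 2 * (2 * k + 1) by omega,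
      Nat.mul_left_comm, Nat.mul_div_cancel_left _ two_pos]
  have hm2 : (2 * k + 1).choose 2 = (2 * k + 1) * k := by
    rw [Nat.choose_two_right, show 2 * k + 1 - 1 = 2 * k by omega,
      Nat.mul_left_comm, Nat.mul_div_cancel_left _ two_pos]
  rw [hhalf, hn2, hm2, show (4 * k + 3) * (2 * k + 1) = 8 * (k * k) + 10 * k + 3 by ring,
    show (2 * k + 1) * k = 2 * (k * k) + k by ring]
  have : 1 ≤ k := by omega
  have : k ≤ k * k := Nat.le_mul_self k
  omega

theorem zero_edges_in_N1_mod_three_general (n : ℕ) (hn : 11 ≤ n) (hmod : n % 4 = 3)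
    (f : Sym2 (Fin n) → Fin 2)
    (h0 : (n.choose 2 - 1) / 2 ≤ edgeCount (⊤ : SimpleGraph (Fin n)) f 0)
    (v : Fin n) (hv : Unlabeled (⊤ : SimpleGraph (Fin n)) f v)
    (hfew : ∀ u ∈ nbr (⊤ : SimpleGraph (Fin n)) f 0 v,
      ((nbr (⊤ : SimpleGraph (Fin n)) f 1 v).filter
        fun w => f s(u, w) = 0).card ≤ 1) :
    1 ≤ (n.choose 2 - 1) / 2 - ((n - 1) / 2).choose 2 - (n - 1) / 2
        - (n - 1) / 2 ∧
      (n.choose 2 - 1) / 2 - ((n - 1) / 2).choose 2 - (n - 1) / 2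
          - (n - 1) / 2 ≤
        edgesWithin (⊤ : SimpleGraph (Fin n)) f 0
          (nbr (⊤ : SimpleGraph (Fin n)) f 1 v) := by
  have hcard0 : (nbr (⊤ : SimpleGraph (Fin n)) f 0 v).card = (n - 1) / 2 := by
    have := hv.two_mul_card_nbr 0
    rw [SimpleGraph.complete_graph_degree, Fintype.card_fin] at this
    omega
  have hsplit := edgeCount_le_add (G := ⊤) (f := f) 0 v (nbr ⊤ f 0 v) (nbr ⊤ f 1 v)
    fun u hu => mem_nbr_zero_or_mem_nbr_one ((SimpleGraph.top_adj _ _).mpr hu.symm)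
  have hincident := edgesIncident_le_card_nbr (G := ⊤) (f := f) 0 v
  have hwithin := edgesWithin_le_choose_two (G := ⊤) (f := f) 0 (nbr ⊤ f 0 v)
  have hbetween := edgesBetween_le_card_mul (G := ⊤) hfew
  have harith := choose_two_half_add_lt (by omega) hmod
  rw [hcard0] at hincident hwithin hbetween
  omega

/-- For `n ≥ 11` with `n ≡ 3 (mod 4)`, if `f` is an
edge-friendly labeling of `K_n` with `e_f(0) ≥ (C(n,2) - 1)/2`, `v` is
unlabeled, and every vertex of `N_0(v)` has at most one `0`-edge to `N_1(v)`,
then the number of `0`-edges inside `N_1(v)` is at least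
`(C(n,2) - 1)/2 - C((n-1)/2, 2) - (n-1)/2 - (n-1)/2 ≥ 1`. -/
theorem zero_edges_in_N1_mod_three (n : ℕ) (hn : 11 ≤ n) (hmod : n % 4 = 3)
    (f : Sym2 (Fin n) → Fin 2) (hf : EdgeFriendly (⊤ : SimpleGraph (Fin n)) f)
    (h0 : (n.choose 2 - 1) / 2 ≤ edgeCount (⊤ : SimpleGraph (Fin n)) f 0)
    (v : Fin n) (hv : Unlabeled (⊤ : SimpleGraph (Fin n)) f v)
    (hfew : ∀ u ∈ nbr (⊤ : SimpleGraph (Fin n)) f 0 v,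
      ((nbr (⊤ : SimpleGraph (Fin n)) f 1 v).filter
        fun w => f s(u, w) = 0).card ≤ 1) :
    1 ≤ (n.choose 2 - 1) / 2 - ((n - 1) / 2).choose 2 - (n - 1) / 2
        - (n - 1) / 2 ∧
      (n.choose 2 - 1) / 2 - ((n - 1) / 2).choose 2 - (n - 1) / 2
          - (n - 1) / 2 ≤
        edgesWithin (⊤ : SimpleGraph (Fin n)) f 0
          (nbr (⊤ : SimpleGraph (Fin n)) f 1 v) :=
  zero_edges_in_N1_mod_three_general n hn hmod f h0 v hv hfew
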